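/- Let Ω := ℝ × (−1,1) ⊂ ℝ² and let u : ℝ² → [0,∞) be continuously differentiable, vanishing outside Ω, even in each variable (u(x₁,x₂) = u(−x₁,x₂) = u(x₁,−x₂)), and nonincreasing in each variable on the positive quadrant (if 0 ≤ x₁ ≤ X₁ and 0 ≤ x₂ ≤ X₂ < 1 then u(X₁,X₂) ≤ u(x₁,x₂)), with ∫_Ω u(x)² dx < ∞ and ∫_Ω |∇u(x)|² dx < ∞. Then for every (x₁,x₂) ∈ Ω with |x₁| ≤ 1 and x₂ ≠ 0, u(x₁,x₂) ≤ |x₂|^{−1/2} [ ( ∫_Ω u(x)² dx )^{1/2} + ( ∫_Ω |∇u(x)|² dx )^{1/2} ]. -/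

import Mathlib

open MeasureTheory Real

/-- The infinite planar strip `Ω = ℝ × (-1,1) ⊂ ℝ²`. -/
def strip : Set (EuclideanSpace ℝ (Fin 2)) := {x | x 1 ∈ Set.Ioo (-1 : ℝ) 1}

/-- The point `(a, b)` of `ℝ²` as an element of `EuclideanSpace ℝ (Fin 2)`. -/
noncomputable def pt (a b : ℝ) : EuclideanSpace ℝ (Fin 2) :=
  (WithLp.equiv 2 (Fin 2 → ℝ)).symm ![a, b]

/-!
Let `0 ≤ a` and `0 < b < 1`. For every `(s, t) ∈ (0,1] × (0,b]`, monotonicity gives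
`u(a,b) ≤ u(a,t)`, and either `u(a,t) ≤ u(s,t)` (if `s ≤ a`) or, by the fundamental theorem of
calculus along the horizontal segment from `(a,t)` to `(s,t)`,
`u(a,t) ≤ u(s,t) + ∫₀¹ |∇u(σ,t)| dσ`. Integrating over this rectangle of area `b` yields
`b u(a,b) ≤ ∫ (u + |∇u|)`, and Cauchy–Schwarz on the rectangle bounds the right-hand side by
`√b (‖u‖_{L²(Ω)} + ‖∇u‖_{L²(Ω)})`. Evenness reduces arbitrary `(a, b)` to this case.
-/

open Set

lemma integral_le_sqrt_measureReal_mul_sqrt_integral_sq {α : Type*} [MeasurableSpace α]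
    {μ : Measure α} [IsFiniteMeasure μ] {f : α → ℝ} (hf : MemLp f 2 μ) :
    ∫ x, f x ∂μ ≤ √(μ.real univ) * √(∫ x, f x ^ 2 ∂μ) := by
  have hf' : MemLp f (ENNReal.ofReal 2) μ := by simpa using hf
  have holder := integral_mul_norm_le_Lp_mul_Lq HolderConjugate.two_two hf' (memLp_const 1)
  simp only [norm_one, mul_one, one_rpow, integral_const, smul_eq_mul, norm_eq_abs] at holder
  calc ∫ x, f x ∂μ ≤ ∫ x, |f x| ∂μ := (le_abs_self _).trans abs_integral_le_integral_abs
    _ ≤ _ := holder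
    _ = _ := by
      rw [mul_comm, sqrt_eq_rpow, sqrt_eq_rpow]
      simp_rw [← sq_abs (f _)]
      norm_cast

lemma setIntegral_le_sqrt_measureReal_mul_sqrt_setIntegral_sq {α : Type*} [MeasurableSpace α]
    {μ : Measure α} {s : Set α} (hs : μ s ≠ ⊤) {f : α → ℝ} (hf : MemLp f 2 (μ.restrict s)) :
    ∫ x in s, f x ∂μ ≤ √(μ.real s) * √(∫ x in s, f x ^ 2 ∂μ) := by
  have : IsFiniteMeasure (μ.restrict s) := isFiniteMeasure_restrict.mpr hs
  simpa using integral_le_sqrt_measureReal_mul_sqrt_integral_sq hf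

lemma Continuous.integrableOn_Ioc_prod_Ioc {E : Type*} [NormedAddCommGroup E] {f : ℝ × ℝ → E}
    (hf : Continuous f) (a b c d : ℝ) : IntegrableOn f (Ioc a b ×ˢ Ioc c d) :=
  (hf.continuousOn.integrableOn_compact (isCompact_Icc.prod isCompact_Icc)).mono_set
    (prod_mono Ioc_subset_Icc_self Ioc_subset_Icc_self)

lemma pt_eq_pt_zero_add_smul (s t : ℝ) : pt s t = pt 0 t + s • pt 1 0 := by
  ext i
  fin_cases i <;> simp [pt]

lemma norm_pt_one_zero : ‖pt 1 0‖ = 1 := by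
  simp [EuclideanSpace.norm_eq, pt]

lemma hasDerivAt_pt_left (s t : ℝ) : HasDerivAt (fun σ => pt σ t) (pt 1 0) s := by
  rw [funext (pt_eq_pt_zero_add_smul · t)]
  simpa using ((hasDerivAt_id s).smul_const (pt 1 0)).const_add (pt 0 t)

lemma continuous_pt_left (t : ℝ) : Continuous fun s => pt s t :=
  continuous_iff_continuousAt.2 fun s => (hasDerivAt_pt_left s t).continuousAt

lemma continuous_pt : Continuous fun p : ℝ × ℝ => pt p.1 p.2 :=
  (PiLp.continuous_toLp 2 _).comp (by fun_prop)

lemma apply_pt_abs_abs {u : EuclideanSpace ℝ (Fin 2) → ℝ}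
    (heven1 : ∀ a b : ℝ, u (pt (-a) b) = u (pt a b))
    (heven2 : ∀ a b : ℝ, u (pt a (-b)) = u (pt a b)) (a b : ℝ) :
    u (pt |a| |b|) = u (pt a b) := by
  rcases abs_choice a with ha | ha <;> rcases abs_choice b with hb | hb <;> rw [ha, hb]
  · rw [heven2]
  · rw [heven1]
  · rw [heven1, heven2]

/-- `(s, t) ↦ pt s t` as a measurable equivalence. -/
noncomputable def ptEquiv : (ℝ × ℝ) ≃ᵐ EuclideanSpace ℝ (Fin 2) :=
  MeasurableEquiv.finTwoArrow.symm.trans (MeasurableEquiv.toLp 2 (Fin 2 → ℝ))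

lemma measurePreserving_ptEquiv : MeasurePreserving ptEquiv volume volume :=
  ((EuclideanSpace.volume_preserving_symm_measurableEquiv_toLp (Fin 2)).symm _).comp
    ((volume_preserving_finTwoArrow ℝ).symm _)

lemma setIntegral_rect_le_sqrt_mul_sqrt_setIntegral_strip {φ : EuclideanSpace ℝ (Fin 2) → ℝ}
    (hφ : Continuous φ) (hint : IntegrableOn (fun x => φ x ^ 2) strip) {b : ℝ} (hb0 : 0 ≤ b)
    (hb1 : b < 1) :
    ∫ p in Ioc 0 1 ×ˢ Ioc 0 b, φ (pt p.1 p.2) ≤ √b * √(∫ x in strip, φ x ^ 2) := by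
  have hvol : volume (Ioc (0 : ℝ) 1 ×ˢ Ioc 0 b) = ENNReal.ofReal b := by
    rw [Measure.volume_eq_prod, Measure.prod_prod]
    simp
  have hcont : Continuous fun p : ℝ × ℝ => φ (pt p.1 p.2) := hφ.comp continuous_pt
  have hmem : MemLp (fun p : ℝ × ℝ => φ (pt p.1 p.2)) 2
      (volume.restrict (Ioc 0 1 ×ˢ Ioc 0 b)) :=
    (memLp_two_iff_integrable_sq hcont.aestronglyMeasurable).2
      ((hcont.pow 2).integrableOn_Ioc_prod_Ioc ..)
  have hsub : ptEquiv '' (Ioc 0 1 ×ˢ Ioc 0 b) ⊆ strip := by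
    rintro _ ⟨p, ⟨-, ht⟩, rfl⟩
    change p.2 ∈ Ioo (-1) 1
    exact ⟨by linarith [ht.1], by linarith [ht.2]⟩
  calc ∫ p in Ioc 0 1 ×ˢ Ioc 0 b, φ (pt p.1 p.2)
      ≤ √b * √(∫ p in Ioc 0 1 ×ˢ Ioc 0 b, φ (pt p.1 p.2) ^ 2) := by
        simpa [measureReal_def, hvol, hb0] using
          setIntegral_le_sqrt_measureReal_mul_sqrt_setIntegral_sq (by simp [hvol]) hmem
    _ = √b * √(∫ x in ptEquiv '' (Ioc 0 1 ×ˢ Ioc 0 b), φ x ^ 2) := by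
        rw [measurePreserving_ptEquiv.setIntegral_image_emb ptEquiv.measurableEmbedding]
        rfl
    _ ≤ √b * √(∫ x in strip, φ x ^ 2) :=
        mul_le_mul_of_nonneg_left (sqrt_le_sqrt (setIntegral_mono_set hint
          (.of_forall fun _ => sq_nonneg _) hsub.eventuallyLE)) (sqrt_nonneg b)

section

variable {u : EuclideanSpace ℝ (Fin 2) → ℝ}

lemma norm_deriv_comp_pt_le (hu : Differentiable ℝ u) (s t : ℝ) :
    ‖deriv (fun σ => u (pt σ t)) s‖ ≤ ‖fderiv ℝ u (pt s t)‖ := by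
  have h : HasDerivAt (fun σ => u (pt σ t)) (fderiv ℝ u (pt s t) (pt 1 0)) s :=
    (hu _).hasFDerivAt.comp_hasDerivAt s (hasDerivAt_pt_left s t)
  simpa [h.deriv, norm_pt_one_zero] using (fderiv ℝ u (pt s t)).le_opNorm (pt 1 0)

lemma abs_sub_le_integral_norm_fderiv (hu : ContDiff ℝ 1 u) {a x : ℝ} (hax : a ≤ x) (t : ℝ) :
    |u (pt x t) - u (pt a t)| ≤ ∫ s in a..x, ‖fderiv ℝ u (pt s t)‖ :=
  norm_sub_le_integral_of_norm_deriv_le_of_le hax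
    (hu.continuous.comp (continuous_pt_left t)).continuousOn
    (fun s _ => ((hu.differentiable one_ne_zero _).hasFDerivAt.comp_hasDerivAt s
      (hasDerivAt_pt_left s t)).differentiableAt.differentiableWithinAt)
    (.of_forall fun s _ => norm_deriv_comp_pt_le (hu.differentiable one_ne_zero) s t)
    (((hu.continuous_fderiv one_ne_zero).comp (continuous_pt_left t)).norm.intervalIntegrable a x)

lemma le_add_integral_norm_fderiv (hu : ContDiff ℝ 1 u)
    (hmono : ∀ a A b B : ℝ, 0 ≤ a → a ≤ A → 0 ≤ b → b ≤ B → B < 1 → u (pt A B) ≤ u (pt a b))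
    {a b s t : ℝ} (ha : 0 ≤ a) (hb : b < 1) (ht : t ∈ Icc 0 b) (hs : s ∈ Icc 0 1) :
    u (pt a b) ≤ u (pt s t) + ∫ σ in (0 : ℝ)..1, ‖fderiv ℝ u (pt σ t)‖ := by
  rcases le_total s a with hsa | has
  · have hJ : 0 ≤ ∫ σ in (0 : ℝ)..1, ‖fderiv ℝ u (pt σ t)‖ :=
      intervalIntegral.integral_nonneg zero_le_one fun _ _ => norm_nonneg _
    have := hmono s a t b hs.1 hsa ht.1 ht.2 hb
    linarith
  · have hcont : Continuous fun σ => ‖fderiv ℝ u (pt σ t)‖ :=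
      ((hu.continuous_fderiv one_ne_zero).comp (continuous_pt_left t)).norm
    have hftc := abs_sub_le_integral_norm_fderiv hu has t
    calc u (pt a b) ≤ u (pt a t) := hmono a a t b ha le_rfl ht.1 ht.2 hb
      _ ≤ u (pt s t) + ∫ σ in a..s, ‖fderiv ℝ u (pt σ t)‖ := by
        linarith [neg_abs_le (u (pt s t) - u (pt a t))]
      _ ≤ u (pt s t) + ∫ σ in (0 : ℝ)..1, ‖fderiv ℝ u (pt σ t)‖ := by
        gcongr
        exact intervalIntegral.integral_mono_interval ha has hs.2
          (.of_forall fun _ => norm_nonneg _) (hcont.intervalIntegrable 0 1)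

lemma le_setIntegral_slice (hu : ContDiff ℝ 1 u)
    (hmono : ∀ a A b B : ℝ, 0 ≤ a → a ≤ A → 0 ≤ b → b ≤ B → B < 1 → u (pt A B) ≤ u (pt a b))
    {a b t : ℝ} (ha : 0 ≤ a) (hb : b < 1) (ht : t ∈ Icc 0 b) :
    u (pt a b) ≤ ∫ s in Ioc 0 1, (u (pt s t) + ‖fderiv ℝ u (pt s t)‖) := by
  have hu_int : IntegrableOn (fun s => u (pt s t)) (Ioc 0 1) :=
    (hu.continuous.comp (continuous_pt_left t)).integrableOn_Ioc
  have hDu_int : IntegrableOn (fun s => ‖fderiv ℝ u (pt s t)‖) (Ioc 0 1) :=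
    ((hu.continuous_fderiv one_ne_zero).comp (continuous_pt_left t)).norm.integrableOn_Ioc
  have hlow := setIntegral_ge_of_const_le measurableSet_Ioc (by simp)
    (fun s hs => sub_le_iff_le_add.2 (le_add_integral_norm_fderiv hu hmono ha hb ht
      (Ioc_subset_Icc_self hs))) hu_int
  simp only [measureReal_def, Real.volume_Ioc, sub_zero, ENNReal.toReal_ofReal zero_le_one,
    one_smul, intervalIntegral.integral_of_le zero_le_one] at hlow
  rw [integral_add hu_int hDu_int]
  linarith

lemma mul_le_setIntegral_rect (hu : ContDiff ℝ 1 u)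
    (hmono : ∀ a A b B : ℝ, 0 ≤ a → a ≤ A → 0 ≤ b → b ≤ B → B < 1 → u (pt A B) ≤ u (pt a b))
    {a b : ℝ} (ha : 0 ≤ a) (hb0 : 0 ≤ b) (hb1 : b < 1) :
    b * u (pt a b) ≤
      ∫ p in Ioc 0 1 ×ˢ Ioc 0 b, (u (pt p.1 p.2) + ‖fderiv ℝ u (pt p.1 p.2)‖) := by
  have hint : IntegrableOn (fun p : ℝ × ℝ => u (pt p.1 p.2) + ‖fderiv ℝ u (pt p.1 p.2)‖)
      (Ioc 0 1 ×ˢ Ioc 0 b) :=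
    ((hu.continuous.comp continuous_pt).add
      ((hu.continuous_fderiv one_ne_zero).comp continuous_pt).norm).integrableOn_Ioc_prod_Ioc ..
  rw [IntegrableOn, Measure.volume_eq_prod, ← Measure.prod_restrict] at hint
  rw [Measure.volume_eq_prod, ← Measure.prod_restrict, integral_prod_symm _ hint]
  simpa [measureReal_def, hb0] using setIntegral_ge_of_const_le measurableSet_Ioc (by simp)
    (fun t ht => le_setIntegral_slice hu hmono ha hb1 (Ioc_subset_Icc_self ht))
    hint.integral_prod_right

lemma apply_pt_le_of_nonneg (hu : ContDiff ℝ 1 u)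
    (hmono : ∀ a A b B : ℝ, 0 ≤ a → a ≤ A → 0 ≤ b → b ≤ B → B < 1 → u (pt A B) ≤ u (pt a b))
    (hL2 : IntegrableOn (fun x => u x ^ 2) strip)
    (hE : IntegrableOn (fun x => ‖fderiv ℝ u x‖ ^ 2) strip)
    {a b : ℝ} (ha : 0 ≤ a) (hb0 : 0 < b) (hb1 : b < 1) :
    u (pt a b) ≤ (√b)⁻¹ * (√(∫ x in strip, u x ^ 2) + √(∫ x in strip, ‖fderiv ℝ u x‖ ^ 2)) := by
  have hcu : Continuous u := hu.continuous
  have hcDu : Continuous fun x => ‖fderiv ℝ u x‖ := (hu.continuous_fderiv one_ne_zero).norm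
  have hcu' : Continuous fun p : ℝ × ℝ => u (pt p.1 p.2) := hcu.comp continuous_pt
  have hcDu' : Continuous fun p : ℝ × ℝ => ‖fderiv ℝ u (pt p.1 p.2)‖ := hcDu.comp continuous_pt
  have hrect := mul_le_setIntegral_rect hu hmono ha hb0.le hb1
  rw [integral_add (hcu'.integrableOn_Ioc_prod_Ioc ..) (hcDu'.integrableOn_Ioc_prod_Ioc ..)]
    at hrect
  have hu_L2 := setIntegral_rect_le_sqrt_mul_sqrt_setIntegral_strip hcu hL2 hb0.le hb1
  have hDu_L2 := setIntegral_rect_le_sqrt_mul_sqrt_setIntegral_strip hcDu hE hb0.le hb1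
  have hsqrt : 0 < √b := sqrt_pos.2 hb0
  rw [inv_mul_eq_div, le_div_iff₀ hsqrt]
  refine le_of_mul_le_mul_left ?_ hsqrt
  calc √b * (u (pt a b) * √b) = b * u (pt a b) := by
        rw [mul_comm (u _), ← mul_assoc, mul_self_sqrt hb0.le]
    _ ≤ √b * (√(∫ x in strip, u x ^ 2) + √(∫ x in strip, ‖fderiv ℝ u x‖ ^ 2)) := by
        linarith

end

theorem strip_decay_second_variable_general (u : EuclideanSpace ℝ (Fin 2) → ℝ)
    (hu : ContDiff ℝ 1 u)
    (heven1 : ∀ a b : ℝ, u (pt (-a) b) = u (pt a b))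
    (heven2 : ∀ a b : ℝ, u (pt a (-b)) = u (pt a b))
    (hmono : ∀ a A b B : ℝ, 0 ≤ a → a ≤ A → 0 ≤ b → b ≤ B → B < 1 →
      u (pt A B) ≤ u (pt a b))
    (hL2 : IntegrableOn (fun x => u x ^ 2) strip)
    (hE : IntegrableOn (fun x => ‖fderiv ℝ u x‖ ^ 2) strip) :
    ∀ a b : ℝ, |a| ≤ 1 → b ≠ 0 → b ∈ Set.Ioo (-1 : ℝ) 1 →
      u (pt a b) ≤ (Real.sqrt |b|)⁻¹ *
        (Real.sqrt (∫ x in strip, u x ^ 2) +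
          Real.sqrt (∫ x in strip, ‖fderiv ℝ u x‖ ^ 2)) := by
  intro a b _ hb hbmem
  rw [← apply_pt_abs_abs heven1 heven2 a b]
  exact apply_pt_le_of_nonneg hu hmono hL2 hE (abs_nonneg a) (abs_pos.2 hb)
    (abs_lt.2 ⟨hbmem.1, hbmem.2⟩)

/-- Decay estimate in the second variable: if `u ≥ 0` is `C¹`, vanishes outside the strip
`Ω = ℝ × (-1,1)`, is even in each variable and nonincreasing in each variable on the positive
quadrant, with `u ∈ L²(Ω)` and finite Dirichlet energy, then for `|x₁| ≤ 1` and `x₂ ≠ 0`,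
`u(x₁,x₂) ≤ |x₂|^{-1/2} [(∫_Ω u²)^{1/2} + (∫_Ω |∇u|²)^{1/2}]`. -/
theorem strip_decay_second_variable (u : EuclideanSpace ℝ (Fin 2) → ℝ)
    (hu : ContDiff ℝ 1 u) (hpos : ∀ x, 0 ≤ u x)
    (hzero : ∀ x, x ∉ strip → u x = 0)
    (heven1 : ∀ a b : ℝ, u (pt (-a) b) = u (pt a b))
    (heven2 : ∀ a b : ℝ, u (pt a (-b)) = u (pt a b))
    (hmono : ∀ a A b B : ℝ, 0 ≤ a → a ≤ A → 0 ≤ b → b ≤ B → B < 1 →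
      u (pt A B) ≤ u (pt a b))
    (hL2 : IntegrableOn (fun x => u x ^ 2) strip)
    (hE : IntegrableOn (fun x => ‖fderiv ℝ u x‖ ^ 2) strip) :
    ∀ a b : ℝ, |a| ≤ 1 → b ≠ 0 → b ∈ Set.Ioo (-1 : ℝ) 1 →
      u (pt a b) ≤ (Real.sqrt |b|)⁻¹ *
        (Real.sqrt (∫ x in strip, u x ^ 2) +
          Real.sqrt (∫ x in strip, ‖fderiv ℝ u x‖ ^ 2)) :=
  strip_decay_second_variable_general u hu heven1 heven2 hmono hL2 hE
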